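/- arXiv:2503.06284 — 4 statements merged into one kernel-verified Lean document; each statement's English description precedes it below -/
import Mathlib

section
/- The snapshot property is an invariant of the abstract transaction model: in every reachable configuration (K,U), for every key k, each transaction writes at most one version of k (distinct indices have distinct writers per key combined with freshness), and each transaction appears at most once in each key's union of reader sets (i.e., a transaction reads at most one version of each key). -/
/-- Transaction identifiers, indexed by a sequence number and a client. -/
inductive Txid (Cl : Type*) | Tn (sn : ℕ) (cl : Cl)

/-- Read/write operations. -/
inductive Op | R | W

/-- A version of a key: value, writer transaction and reader set. -/
structure Version (V Cl : Type*) where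
  val : V
  writer : Txid Cl
  readers : Set (Txid Cl)

abbrev KVS (K V Cl : Type*) := K → List (Version V Cl)
abbrev View (K : Type*) := K → Set ℕ
abbrev Fingerpr (K V : Type*) := K → Op → Option V

/-- Configurations: a central KVS and the clients' views. -/
abbrev Config (K V Cl : Type*) := KVS K V Cl × (Cl → View K)

/-- Pointwise order on views. -/
def viewLe {K : Type*} (u u' : View K) : Prop := ∀ k, u k ⊆ u' k

/-- View wellformedness. -/
def wfView {K V Cl : Type*} (𝒦 : KVS K V Cl) (u : View K) : Prop :=
  ∀ k, 0 ∈ u k ∧ ∀ i ∈ u k, i < (𝒦 k).length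

/-- Last-write-wins: reads return the value at the maximal visible index. -/
def LWW {K V Cl : Type*} (𝒦 : KVS K V Cl) (u : View K) (F : Fingerpr K V) : Prop :=
  ∀ k v, F k Op.R = some v →
    ∃ ver, (𝒦 k)[sSup (u k)]? = some ver ∧ ver.val = v

/-- A transaction ID occurs in the KVS (as a writer or a reader). -/
def txidIn {K V Cl : Type*} (𝒦 : KVS K V Cl) (t : Txid Cl) : Prop :=
  ∃ k, ∃ ver ∈ 𝒦 k, ver.writer = t ∨ t ∈ ver.readers

/-- Fresh transaction IDs of client `cl`: the sequence number exceeds all of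
`cl`'s sequence numbers occurring in `𝒦`. -/
def nextTxids {K V Cl : Type*} (𝒦 : KVS K V Cl) (cl : Cl) : Set (Txid Cl) :=
  {t | ∃ sn, t = Txid.Tn sn cl ∧ ∀ n, txidIn 𝒦 (Txid.Tn n cl) → n < sn}

/-- Add `t` to the reader set of the version at index `i` (if it exists). -/
def addReader {V Cl : Type*} (t : Txid Cl) (i : ℕ) (vl : List (Version V Cl)) :
    List (Version V Cl) :=
  match vl[i]? with
  | some ver => vl.set i { ver with readers := insert t ver.readers }
  | none => vl

/-- Record the fingerprint `F`'s operations of transaction `t` in `𝒦`. -/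
noncomputable def UpdateKV {K V Cl : Type*} (𝒦 : KVS K V Cl) (t : Txid Cl) (u : View K)
    (F : Fingerpr K V) : KVS K V Cl :=
  fun k =>
    let vl := if (F k Op.R).isSome then addReader t (sSup (u k)) (𝒦 k) else 𝒦 k
    match F k Op.W with
    | some v => vl ++ [⟨v, t, ∅⟩]
    | none => vl

/-- Events of the abstract transaction model. -/
inductive AEvent (K V Cl : Type*)
  | commit (cl : Cl) (sn : ℕ) (u u' : View K) (F : Fingerpr K V)
  | xview (cl : Cl) (u : View K)
  | skip

/-- Transition relation of the abstract transaction model. -/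
def astep {K V Cl : Type*} [DecidableEq Cl] :
    AEvent K V Cl → Config K V Cl → Config K V Cl → Prop
  | .commit cl sn u u' F => fun c c' =>
      viewLe (c.2 cl) u ∧ wfView c.1 u ∧ wfView c'.1 u' ∧ LWW c.1 u F ∧
      Txid.Tn sn cl ∈ nextTxids c.1 cl ∧
      c'.1 = UpdateKV c.1 (Txid.Tn sn cl) u F ∧
      c'.2 = Function.update c.2 cl u'
  | .xview cl u => fun c c' =>
      viewLe (c.2 cl) u ∧ wfView c.1 u ∧
      c'.1 = c.1 ∧ c'.2 = Function.update c.2 cl u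
  | .skip => fun c c' => c' = c

/-- Initial configurations: each key has a single initial version with empty
reader set, and all client views see exactly that version. -/
def ainit {K V Cl : Type*} (c : Config K V Cl) : Prop :=
  (∀ k, ∃ ver : Version V Cl, c.1 k = [ver] ∧ ver.readers = ∅) ∧
  (∀ cl k, c.2 cl k = {0})

/-- Reachable configurations of the abstract transaction model. -/
inductive AReach {K V Cl : Type*} [DecidableEq Cl] : Config K V Cl → Prop
  | init : ∀ c, ainit c → AReach c
  | step : ∀ c e c', AReach c → astep e c c' → AReach c'

lemma addReader_getElem? {V Cl : Type*} (t : Txid Cl) (i j : ℕ)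
    (vl : List (Version V Cl)) :
    (addReader t i vl)[j]? =
      if j = i then (vl[j]?).map (fun ver => { ver with readers := insert t ver.readers })
      else vl[j]? := by
  unfold addReader
  cases h : vl[i]? with
  | none =>
    simp only [h]
    by_cases hji : j = i
    · subst hji; rw [if_pos rfl, h]; rfl
    · rw [if_neg hji]
  | some ver =>
    have hlt : i < vl.length := (List.getElem?_eq_some_iff.mp h).1
    simp only [h, List.getElem?_set]
    by_cases hij : i = j
    · rw [if_pos hij, if_pos hlt, if_pos hij.symm, ← hij, h]; rfl
    · rw [if_neg hij, if_neg (fun hh => hij hh.symm)]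

lemma fresh_not_in {K V Cl : Type*} (𝒦 : KVS K V Cl) (cl : Cl) (sn : ℕ)
    (h : Txid.Tn sn cl ∈ nextTxids 𝒦 cl) : ¬ txidIn 𝒦 (Txid.Tn sn cl) := by
  obtain ⟨sn', heq, hall⟩ := h
  cases heq
  intro hin
  exact lt_irrefl _ (hall _ hin)

/-- The snapshot property (as a per-KVS predicate). -/
def SnapProp {K V Cl : Type*} (𝒦 : KVS K V Cl) : Prop :=
  (∀ (k : K) (i j : ℕ) (veri verj : Version V Cl), (𝒦 k)[i]? = some veri → (𝒦 k)[j]? = some verj →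
     veri.writer = verj.writer → i = j) ∧
  (∀ (k : K) (i j : ℕ) (veri verj : Version V Cl) (t : Txid Cl),
     (𝒦 k)[i]? = some veri → (𝒦 k)[j]? = some verj →
     t ∈ veri.readers → t ∈ verj.readers → i = j)

lemma snapProp_update {K V Cl : Type*} (𝒦 : KVS K V Cl) (t : Txid Cl) (u : View K)
    (F : Fingerpr K V) (hfresh : ¬ txidIn 𝒦 t) (ih : SnapProp 𝒦) :
    SnapProp (UpdateKV 𝒦 t u F) := by
  obtain ⟨ih1, ih2⟩ := ih
  -- properties of the intermediate list
  have hvl : ∀ (k : K),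
      (let vl := if (F k Op.R).isSome then addReader t (sSup (u k)) (𝒦 k) else 𝒦 k;
       vl.length = (𝒦 k).length ∧
       ∀ j ver', vl[j]? = some ver' → ∃ ver, (𝒦 k)[j]? = some ver ∧
         ver'.writer = ver.writer ∧
         (ver'.readers = ver.readers ∨
           (j = sSup (u k) ∧ ver'.readers = insert t ver.readers))) := by
    intro k
    dsimp only
    split
    · constructor
      · unfold addReader
        cases h : (𝒦 k)[sSup (u k)]? <;> simp
      · intro j ver' hj
        rw [addReader_getElem?] at hj
        split at hj
        · next hji =>
          cases h : (𝒦 k)[j]? with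
          | none => rw [h] at hj; exact absurd hj (by simp)
          | some ver =>
            rw [h] at hj
            refine ⟨ver, rfl, ?_, ?_⟩
            · cases hj; rfl
            · right; cases hj; exact ⟨hji, rfl⟩
        · exact ⟨ver', hj, rfl, Or.inl rfl⟩
    · constructor
      · rfl
      · intro j ver' hj; exact ⟨ver', hj, rfl, Or.inl rfl⟩
  -- freshness consequences
  have hfw : ∀ (k : K) (j : ℕ) (ver : Version V Cl), (𝒦 k)[j]? = some ver →
      ver.writer ≠ t ∧ t ∉ ver.readers := by
    intro k j ver hj
    have hmem : ver ∈ 𝒦 k := by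
      obtain ⟨h1, h2⟩ := List.getElem?_eq_some_iff.mp hj
      exact h2 ▸ List.getElem_mem h1
    constructor
    · intro hw; exact hfresh ⟨k, ver, hmem, Or.inl hw⟩
    · intro hr; exact hfresh ⟨k, ver, hmem, Or.inr hr⟩
  constructor
  · intro k i j veri verj hi hj hw
    have := hvl k
    dsimp only at this
    obtain ⟨hlen, hget⟩ := this
    unfold UpdateKV at hi hj
    dsimp only at hi hj
    set vl := if (F k Op.R).isSome then addReader t (sSup (u k)) (𝒦 k) else 𝒦 k with hvldef
    cases hW : F k Op.W with
    | none =>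
      rw [hW] at hi hj
      obtain ⟨vi, hvi, hwi, _⟩ := hget i veri hi
      obtain ⟨vj, hvj, hwj, _⟩ := hget j verj hj
      exact ih1 k i j vi vj hvi hvj (by rw [← hwi, ← hwj, hw])
    | some v =>
      rw [hW] at hi hj
      rw [List.getElem?_append] at hi hj
      split at hi
      · next hilt =>
        obtain ⟨vi, hvi, hwi, _⟩ := hget i veri hi
        split at hj
        · next hjlt =>
          obtain ⟨vj, hvj, hwj, _⟩ := hget j verj hj
          exact ih1 k i j vi vj hvi hvj (by rw [← hwi, ← hwj, hw])
        · -- j = vl.length, verj.writer = t but veri.writer ≠ t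
          have : verj = ⟨v, t, ∅⟩ := by
            cases hj' : ([(⟨v, t, ∅⟩ : Version V Cl)])[j - vl.length]? with
            | none => rw [hj'] at hj; exact absurd hj (by simp)
            | some w =>
              rw [hj'] at hj
              cases hj
              have : j - vl.length < 1 := (List.getElem?_eq_some_iff.mp hj').1
              interval_cases h : (j - vl.length)
              · simpa [h] using hj'.symm
          have hwt : verj.writer = t := by rw [this]
          have := (hfw k i vi hvi).1
          exact absurd (by rw [← hwi, hw, hwt]) this
      · next hige =>
        split at hj
        · next hjlt =>
          obtain ⟨vj, hvj, hwj, _⟩ := hget j verj hj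
          have : veri = ⟨v, t, ∅⟩ := by
            cases hi' : ([(⟨v, t, ∅⟩ : Version V Cl)])[i - vl.length]? with
            | none => rw [hi'] at hi; exact absurd hi (by simp)
            | some w =>
              rw [hi'] at hi
              cases hi
              have : i - vl.length < 1 := (List.getElem?_eq_some_iff.mp hi').1
              interval_cases h : (i - vl.length)
              · simpa [h] using hi'.symm
          have hwt : veri.writer = t := by rw [this]
          have := (hfw k j vj hvj).1
          exact absurd (by rw [← hwj, ← hw, hwt]) this
        · next hjge =>
          push_neg at hige hjge
          have hi1 : i - vl.length < 1 := (List.getElem?_eq_some_iff.mp hi).1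
          have hj1 : j - vl.length < 1 := (List.getElem?_eq_some_iff.mp hj).1
          omega
  · intro k i j veri verj t' hi hj hti htj
    have := hvl k
    dsimp only at this
    obtain ⟨hlen, hget⟩ := this
    unfold UpdateKV at hi hj
    dsimp only at hi hj
    set vl := if (F k Op.R).isSome then addReader t (sSup (u k)) (𝒦 k) else 𝒦 k with hvldef
    -- reduce to the vl case
    have key : ∀ (i j : ℕ) (veri verj : Version V Cl),
        vl[i]? = some veri → vl[j]? = some verj →
        t' ∈ veri.readers → t' ∈ verj.readers → i = j := by
      intro i j veri verj hi hj hti htj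
      obtain ⟨vi, hvi, _, hri⟩ := hget i veri hi
      obtain ⟨vj, hvj, _, hrj⟩ := hget j verj hj
      have hno_i := (hfw k i vi hvi).2
      have hno_j := (hfw k j vj hvj).2
      rcases hri with hri | ⟨hiS, hri⟩
      · rcases hrj with hrj | ⟨hjS, hrj⟩
        · exact ih2 k i j vi vj t' (hvi) (hvj) (hri ▸ hti) (hrj ▸ htj)
        · -- t' ∈ vi.readers (original) so t' ≠ t
          have ht'i : t' ∈ vi.readers := hri ▸ hti
          have htne : t' ≠ t := fun h => hno_i (h ▸ ht'i)
          have : t' ∈ vj.readers := by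
            rw [hrj] at htj
            rcases htj with h | h
            · exact absurd h htne
            · exact h
          exact ih2 k i j vi vj t' hvi hvj ht'i this
      · rcases hrj with hrj | ⟨hjS, hrj⟩
        · have ht'j : t' ∈ vj.readers := hrj ▸ htj
          have htne : t' ≠ t := fun h => hno_j (h ▸ ht'j)
          have : t' ∈ vi.readers := by
            rw [hri] at hti
            rcases hti with h | h
            · exact absurd h htne
            · exact h
          exact ih2 k i j vi vj t' hvi hvj this ht'j
        · rw [hiS, hjS]
    cases hW : F k Op.W with
    | none =>
      rw [hW] at hi hj
      exact key i j veri verj hi hj hti htj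
    | some v =>
      rw [hW] at hi hj
      rw [List.getElem?_append] at hi hj
      split at hi
      · split at hj
        · exact key i j veri verj hi hj hti htj
        · -- verj is the new version, readers ∅
          exfalso
          have : verj = ⟨v, t, ∅⟩ := by
            cases hj' : ([(⟨v, t, ∅⟩ : Version V Cl)])[j - vl.length]? with
            | none => rw [hj'] at hj; exact absurd hj (by simp)
            | some w =>
              rw [hj'] at hj
              cases hj
              have : j - vl.length < 1 := (List.getElem?_eq_some_iff.mp hj').1
              interval_cases h : (j - vl.length)
              · simpa [h] using hj'.symm
          rw [this] at htj
          exact htj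
      · exfalso
        have : veri = ⟨v, t, ∅⟩ := by
          cases hi' : ([(⟨v, t, ∅⟩ : Version V Cl)])[i - vl.length]? with
          | none => rw [hi'] at hi; exact absurd hi (by simp)
          | some w =>
            rw [hi'] at hi
            cases hi
            have : i - vl.length < 1 := (List.getElem?_eq_some_iff.mp hi').1
            interval_cases h : (i - vl.length)
            · simpa [h] using hi'.symm
        rw [this] at hti
        exact hti
/-- the snapshot property is an invariant of the abstract
transaction model: each transaction writes at most one version of each key and
reads at most one version of each key. -/
theorem snapshot_property_invariant {K V Cl : Type*} [DecidableEq Cl]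
    (c : Config K V Cl) (h : AReach c) :
    (∀ (k : K) (i j : ℕ) (veri verj : Version V Cl), (c.1 k)[i]? = some veri → (c.1 k)[j]? = some verj →
       veri.writer = verj.writer → i = j) ∧
    (∀ (k : K) (i j : ℕ) (veri verj : Version V Cl) (t : Txid Cl),
       (c.1 k)[i]? = some veri → (c.1 k)[j]? = some verj →
       t ∈ veri.readers → t ∈ verj.readers → i = j) := by
  induction h with
  | init c hc =>
    obtain ⟨h1, _⟩ := hc
    constructor
    · intro k i j veri verj hi hj _
      obtain ⟨ver, hk, _⟩ := h1 k
      rw [hk] at hi hj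
      have hi1 : i < 1 := (List.getElem?_eq_some_iff.mp hi).1
      have hj1 : j < 1 := (List.getElem?_eq_some_iff.mp hj).1
      omega
    · intro k i j veri verj t hi hj hti _
      obtain ⟨ver, hk, hre⟩ := h1 k
      rw [hk] at hi
      have hi1 : i < 1 := (List.getElem?_eq_some_iff.mp hi).1
      interval_cases i
      simp only [List.getElem?_cons_zero] at hi
      cases hi
      rw [hre] at hti
      exact absurd hti (Set.notMem_empty t)
  | step c e c' _ hstep ih =>
    cases e with
    | skip => rw [hstep]; exact ih
    | xview cl u => rw [hstep.2.2.1]; exact ih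
    | commit cl sn u u' F =>
      obtain ⟨_, _, _, _, hfresh, hK, _⟩ := hstep
      rw [hK]
      exact snapProp_update c.1 (Txid.Tn sn cl) u F
        (fresh_not_in c.1 cl sn hfresh) ⟨ih.1, ih.2⟩
end

section
/- Transaction ID freshness is preserved: in the abstract transaction model, if Tn(sn,cl) ∈ nextTxids(K,cl) and (K,U) transitions via a commit by a different client cl' ≠ cl or via a view extension event, to (K',U'), then Tn(sn,cl) ∈ nextTxids(K',cl). -/
lemma txidIn_UpdateKV {K V Cl : Type*} {𝒦 : KVS K V Cl} {t s : Txid Cl}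
    {u : View K} {F : Fingerpr K V} (hne : s ≠ t)
    (h : txidIn (UpdateKV 𝒦 t u F) s) : txidIn 𝒦 s := by
  obtain ⟨k, ver, hmem, hver⟩ := h
  refine ⟨k, ?_⟩
  have hmem' : ver ∈ (if (F k Op.R).isSome then addReader t (sSup (u k)) (𝒦 k) else 𝒦 k)
      ∨ (ver.writer = t ∧ ver.readers = ∅) := by
    unfold UpdateKV at hmem
    simp only at hmem
    cases hW : F k Op.W with
    | none => rw [hW] at hmem; exact Or.inl hmem
    | some v =>
      rw [hW] at hmem
      rcases List.mem_append.mp hmem with h1 | h1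
      · exact Or.inl h1
      · simp at h1; subst h1; exact Or.inr ⟨rfl, rfl⟩
  rcases hmem' with h1 | ⟨hw, hr⟩
  · have : ver ∈ addReader t (sSup (u k)) (𝒦 k) ∨ ver ∈ 𝒦 k := by
      split at h1 <;> [exact Or.inl h1; exact Or.inr h1]
    rcases this with h2 | h2
    · unfold addReader at h2
      cases hgl : (𝒦 k)[sSup (u k)]? with
      | none => rw [hgl] at h2; exact ⟨ver, h2, hver⟩
      | some ver0 =>
        rw [hgl] at h2
        rcases List.mem_or_eq_of_mem_set h2 with h3 | h3
        · exact ⟨ver, h3, hver⟩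
        · subst h3
          refine ⟨ver0, (List.getElem?_eq_some_iff.mp hgl).elim (fun _ h => h ▸ List.getElem_mem _), ?_⟩
          simp only at hver
          rcases hver with h4 | h4
          · exact Or.inl h4
          · rcases Set.mem_insert_iff.mp h4 with h5 | h5
            · exact absurd h5 hne
            · exact Or.inr h5
    · exact ⟨ver, h2, hver⟩
  · exfalso
    rcases hver with h4 | h4
    · exact hne (hw ▸ h4.symm ▸ rfl)
    · rw [hr] at h4; exact h4

/-- transaction ID freshness is preserved by commits of other
clients and by view extension events. -/
theorem freshness_preserved {K V Cl : Type*} [DecidableEq Cl]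
    (e : AEvent K V Cl) (c c' : Config K V Cl) (cl : Cl) (sn : ℕ)
    (hstep : astep e c c')
    (hfresh : Txid.Tn sn cl ∈ nextTxids c.1 cl)
    (hcase : (∃ cl' sn' u u' F, e = .commit cl' sn' u u' F ∧ cl' ≠ cl) ∨
             (∃ cl' u, e = .xview cl' u)) :
    Txid.Tn sn cl ∈ nextTxids c'.1 cl := by
  obtain ⟨sn0, heq, hall⟩ := hfresh
  obtain ⟨rfl⟩ : sn0 = sn := by injection heq.symm
  rcases hcase with ⟨cl', sn', u, u', F, rfl, hne⟩ | ⟨cl', u, rfl⟩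
  · obtain ⟨_, _, _, _, _, hK, _⟩ := hstep
    refine ⟨sn, rfl, fun n hn => hall n ?_⟩
    rw [hK] at hn
    exact txidIn_UpdateKV (by simp [Txid.Tn.injEq, hne.symm]) hn
  · obtain ⟨_, _, hK, _⟩ := hstep
    rw [hK]
    exact ⟨sn, rfl, hall⟩
end

section
/- In the simple serialized transaction model, the model C with separate read, write, and commit events refines the atomic transaction model A: defining r(S, fR, fW) = S and π(commit(fR,fW)) = txn(fR,fW) with read and write mapping to skip, every transition of C is simulated by A, using the invariant fR ⊆ S. -/
/-- A single-version KVS. -/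
abbrev KV (K V : Type*) := K → V

/-- A fingerprint: a partial map from keys to values. -/
abbrev FP (K V : Type*) := K → Option V

/-- `f ⊆ S`: every key-value mapping of `f` is present in `S`. -/
def fpSub {K V : Type*} (f : FP K V) (S : KV K V) : Prop :=
  ∀ k v, f k = some v → S k = v

/-- `S ▷ f`: the KVS `S` updated with the values in `f`. -/
def override {K V : Type*} (S : KV K V) (f : FP K V) : KV K V :=
  fun k => (f k).getD (S k)

/-- Events of the atomic model `A`. -/
inductive EvA (K V : Type*)
  | txn (fR fW : FP K V)
  | skip

/-- Transitions of the atomic model `A`: a whole transaction in one step. -/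
def trA {K V : Type*} : EvA K V → KV K V → KV K V → Prop
  | .txn fR fW => fun S S' => fpSub fR S ∧ S' = override S fW
  | .skip => fun S S' => S' = S

/-- In model `A` all states are initial. -/
def initA {K V : Type*} : Set (KV K V) := Set.univ

/-- States of the serialized model `C`: a KVS and two fingerprints. -/
structure StC (K V : Type*) where
  S : KV K V
  fR : FP K V
  fW : FP K V

/-- Events of the serialized model `C`. -/
inductive EvC (K V : Type*)
  | read (k : K) (v : V)
  | write (k : K) (v : V)
  | commit (fR fW : FP K V)
  | skip

/-- Transitions of the serialized model `C`. -/
def trC {K V : Type*} [DecidableEq K] : EvC K V → StC K V → StC K V → Prop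
  | .read k v => fun s s' =>
      s.S k = v ∧ s' = { s with fR := Function.update s.fR k (some v) }
  | .write k v => fun s s' =>
      s' = { s with fW := Function.update s.fW k (some v) }
  | .commit fR fW => fun s s' =>
      fR = s.fR ∧ fW = s.fW ∧
      s' = ⟨override s.S s.fW, fun _ => none, fun _ => none⟩
  | .skip => fun s s' => s' = s

/-- Initial states of `C`: both fingerprints are empty. -/
def initC {K V : Type*} (s : StC K V) : Prop :=
  s.fR = (fun _ => none) ∧ s.fW = (fun _ => none)

/-- Reachable states of model `C`. -/
inductive ReachC {K V : Type*} [DecidableEq K] : StC K V → Prop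
  | init : ∀ s, initC s → ReachC s
  | step : ∀ s e s', ReachC s → trC e s s' → ReachC s'

/-- The refinement mapping on events. -/
def evMap {K V : Type*} : EvC K V → EvA K V
  | .commit fR fW => .txn fR fW
  | _ => .skip

/-- The refinement mapping on states. -/
def stMap {K V : Type*} (s : StC K V) : KV K V := s.S

lemma inv_fR_sub {K V : Type*} [DecidableEq K] :
    ∀ s : StC K V, ReachC s → fpSub s.fR s.S := by
  intro s h
  induction h with
  | init s hi => intro k v hk; rw [hi.1] at hk; cases hk
  | step s e s' _ htr ih =>
    cases e with
    | read k v =>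
      obtain ⟨hS, rfl⟩ := htr
      intro k' v' hk'
      by_cases hkk : k' = k
      · subst hkk
        simp [Function.update] at hk'
        simp [hk', hS]
      · simp [Function.update, hkk] at hk'
        exact ih k' v' hk'
    | write k v =>
      subst htr; exact ih
    | commit fR fW =>
      obtain ⟨_, _, rfl⟩ := htr
      intro k v hk; cases hk
    | skip => subst htr; exact ih

/-- the serialized model `C` refines the atomic model `A` via
`stMap` and `evMap`: initial states map to initial states, and (using the
invariant `fR ⊆ S` of reachable states) every transition of `C` is simulated
by the mapped transition of `A`. -/
theorem C_refines_A {K V : Type*} [DecidableEq K] :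
    (∀ s : StC K V, initC s → stMap s ∈ initA) ∧
    (∀ (s : StC K V) (e : EvC K V) (s' : StC K V),
       ReachC s → trC e s s' → trA (evMap e) (stMap s) (stMap s')) := by
  refine ⟨fun s _ => Set.mem_univ _, fun s e s' hr htr => ?_⟩
  cases e with
  | read k v => obtain ⟨_, rfl⟩ := htr; rfl
  | write k v => subst htr; rfl
  | commit fR fW =>
    obtain ⟨rfl, rfl, rfl⟩ := htr
    exact ⟨inv_fR_sub s hr, rfl⟩
  | skip => subst htr; rfl
end

section
/- The read-fingerprint invariant of the serialized transaction model: in every reachable state (S, fR, fW) of model C, fR ⊆ S, i.e., for every key k ∈ dom(fR), fR(k) = S(k). -/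
/-- the read-fingerprint invariant of the serialized model `C`:
in every reachable state, `fR ⊆ S`. -/
theorem read_fingerprint_invariant {K V : Type*} [DecidableEq K]
    (s : StC K V) (h : ReachC s) : fpSub s.fR s.S := by
  induction h with
  | init s hs => intro k v hk; rw [hs.1] at hk; exact absurd hk (by simp)
  | step s e s' _ htr ih =>
    cases e with
    | read k v =>
      obtain ⟨hg, rfl⟩ := htr
      intro k' v' hk'
      by_cases hkk : k' = k
      · subst hkk
        simp [Function.update] at hk'
        subst hk'; exact hg
      · simp only [Function.update, dif_neg hkk] at hk'
        exact ih k' v' hk'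
    | write k v =>
      subst htr; exact ih
    | commit fR fW =>
      obtain ⟨_, _, rfl⟩ := htr
      intro k v hk; simp at hk
    | skip => subst htr; exact ih
end
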